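/- For a probability distribution (p_i) and density matrices (ρ_i) on a finite-dimensional Hilbert space, the von Neumann entropy satisfies ∑_i p_i S(ρ_i) ≤ S(∑_i p_i ρ_i) ≤ ∑_i p_i S(ρ_i) + H(p), where H(p) is the Shannon entropy of (p_i). -/

import Mathlib

/-!
Write `η x = -x log x`, which is concave on `[0, ∞)`, and `σ = ∑ i, p i • ρ i`.

Lower bound: in any orthonormal basis `(u k)`, the diagonal entries `⟨u k, ρ u k⟩` of a state `ρ`
with eigenvectors `v l` are obtained from its spectrum by the doubly stochastic matrix
`|⟨u k, v l⟩|²`, so Jensen's inequality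
gives `S ρ ≤ ∑ k, η ⟨u k, ρ u k⟩`. In the eigenbasis of `σ`, the eigenvalues of `σ` are the
`p`-averages of these diagonal entries, and a second use of Jensen gives concavity of `S`.

Upper bound: if `ρ i` has eigenvalues `μ i l` and eigenvectors `ψ (i, l)`, then `σ` is the mixture
of pure states `∑ j, q j • |ψ j⟩⟨ψ j|` with `q (i, l) = p i * μ i l`, and
`H q = ∑ i, p i * S (ρ i) + H p`. For any such mixture `S σ ≤ H q`: if `σ` has eigenvalues `λ k`
and eigenvectors `u k`, then `B j k = q j |⟨u k, ψ j⟩|² / λ k` sums to `1` over `j` (when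
`λ k ≠ 0`), has `∑ k, B j k * λ k = q j`, and `∑ k, B j k ≤ 1` because `q j |ψ j⟩⟨ψ j| ≤ σ`
forces `q j ⟨ψ j, σ⁺ ψ j⟩ ≤ 1`. Jensen with the subprobability weights `B j ·` then gives
`∑ k, η (λ k) ≤ ∑ j, η (q j)`.
-/

open Matrix BigOperators
open scoped Kronecker ComplexOrder

noncomputable def shannonEntropy {d : ℕ} (p : Fin d → ℝ) : ℝ := ∑ x, Real.negMulLog (p x)

noncomputable def binEnt (x : ℝ) : ℝ := Real.negMulLog x + Real.negMulLog (1 - x)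

def IsProb {d : ℕ} (p : Fin d → ℝ) : Prop := (∀ x, 0 ≤ p x) ∧ ∑ x, p x = 1

def IsDensity {n : Type*} [Fintype n] [DecidableEq n] (ρ : Matrix n n ℂ) : Prop :=
  ρ.PosSemidef ∧ ρ.trace = 1

noncomputable def traceNorm {n : Type*} [Fintype n] [DecidableEq n] (A : Matrix n n ℂ) : ℝ :=
  ∑ i, Real.sqrt ((Matrix.posSemidef_conjTranspose_mul_self A).1.eigenvalues i)

noncomputable def vnEntropy {n : Type*} [Fintype n] [DecidableEq n] (ρ : Matrix n n ℂ) : ℝ :=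
  if h : ρ.IsHermitian then ∑ i, Real.negMulLog (h.eigenvalues i) else 0

noncomputable def ptraceA {a b : ℕ} (ρ : Matrix (Fin a × Fin b) (Fin a × Fin b) ℂ) : Matrix (Fin b) (Fin b) ℂ :=
  Matrix.of fun j j' => ∑ i, ρ (i, j) (i, j')

noncomputable def ptraceB {a b : ℕ} (ρ : Matrix (Fin a × Fin b) (Fin a × Fin b) ℂ) : Matrix (Fin a) (Fin a) ℂ :=
  Matrix.of fun i i' => ∑ j, ρ (i, j) (i', j)

noncomputable def condEnt {a b : ℕ} (ρ : Matrix (Fin a × Fin b) (Fin a × Fin b) ℂ) : ℝ :=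
  vnEntropy ρ - vnEntropy (ptraceA ρ)

noncomputable def posPart {n : Type*} [Fintype n] [DecidableEq n] (A : Matrix n n ℂ) : Matrix n n ℂ :=
  if h : A.IsHermitian then
    (h.eigenvectorUnitary : Matrix n n ℂ) * Matrix.diagonal (fun i => ((max (h.eigenvalues i) 0 : ℝ) : ℂ)) *
      (h.eigenvectorUnitary : Matrix n n ℂ)ᴴ
  else 0

noncomputable def matLog {n : Type*} [Fintype n] [DecidableEq n] (A : Matrix n n ℂ) : Matrix n n ℂ :=
  if h : A.IsHermitian then
    (h.eigenvectorUnitary : Matrix n n ℂ) * Matrix.diagonal (fun i => (Real.log (h.eigenvalues i) : ℂ)) *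
      (h.eigenvectorUnitary : Matrix n n ℂ)ᴴ
  else 0

noncomputable def relEnt {n : Type*} [Fintype n] [DecidableEq n] (ρ γ : Matrix n n ℂ) : ℝ :=
  ((ρ * (matLog ρ - matLog γ)).trace).re

open Classical in
noncomputable def matSqrt {n : Type*} [Fintype n] [DecidableEq n] (A : Matrix n n ℂ) : Matrix n n ℂ :=
  if h : A.PosSemidef then
    (h.1.eigenvectorUnitary : Matrix n n ℂ) * Matrix.diagonal (fun i => ((Real.sqrt (h.1.eigenvalues i) : ℝ) : ℂ)) *
      (star h.1.eigenvectorUnitary : Matrix n n ℂ)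
  else 0

noncomputable def fidelity {n : Type*} [Fintype n] [DecidableEq n] (ρ σ : Matrix n n ℂ) : ℝ :=
  traceNorm (matSqrt ρ * matSqrt σ)

noncomputable def maxEig {n : Type*} [Fintype n] [DecidableEq n] (A : Matrix n n ℂ) : ℝ :=
  if h : A.IsHermitian then ⨆ i, h.eigenvalues i else 0

noncomputable def outer {n : Type*} [Fintype n] (v : n → ℂ) : Matrix n n ℂ :=
  Matrix.vecMulVec v (star v)


open Real (negMulLog)

lemma sum_mul_negMulLog_le_negMulLog_sum {ι : Type*} [Fintype ι] {w x : ι → ℝ}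
    (hw : ∀ i, 0 ≤ w i) (hw1 : ∑ i, w i ≤ 1) (hx : ∀ i, 0 ≤ x i) :
    ∑ i, w i * negMulLog (x i) ≤ negMulLog (∑ i, w i * x i) := by
  -- the missing mass `1 - ∑ w` sits at the point `0`, where `negMulLog` vanishes
  simpa [Real.negMulLog_zero] using Real.concaveOn_negMulLog.map_add_sum_le
    (t := Finset.univ) (w := w) (p := x) (q := 0) (v := 1 - ∑ i, w i) (fun i _ => hw i)
    (by ring) (fun i _ => hx i) (by linarith) Set.self_mem_Ici

lemma sum_sum_mul_negMulLog_le_sum_negMulLog {ι κ : Type*} [Fintype ι] [Fintype κ]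
    {D : κ → ι → ℝ} {x : ι → ℝ} (hD : ∀ k i, 0 ≤ D k i) (hD1 : ∀ k, ∑ i, D k i ≤ 1)
    (hx : ∀ i, 0 ≤ x i) :
    ∑ i, (∑ k, D k i) * negMulLog (x i) ≤ ∑ k, negMulLog (∑ i, D k i * x i) :=
  calc ∑ i, (∑ k, D k i) * negMulLog (x i) = ∑ k, ∑ i, D k i * negMulLog (x i) := by
        simp_rw [Finset.sum_mul]; exact Finset.sum_comm
    _ ≤ _ := Finset.sum_le_sum fun k _ => sum_mul_negMulLog_le_negMulLog_sum (hD k) (hD1 k) hx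

lemma sum_negMulLog_mul_of_sum_eq_one {ι : Type*} [Fintype ι] (c : ℝ) {x : ι → ℝ}
    (hx : ∑ i, x i = 1) :
    ∑ i, negMulLog (c * x i) = c * ∑ i, negMulLog (x i) + negMulLog c := by
  simp_rw [Real.negMulLog_mul, Finset.sum_add_distrib, ← Finset.sum_mul, ← Finset.mul_sum, hx]
  ring

section QuadraticForm

variable {n J : Type*} [Fintype n] [Fintype J] [DecidableEq J]

lemma star_dotProduct_diagonal_mulVec (q : J → ℝ) (w : J → ℂ) :
    star w ⬝ᵥ diagonal (fun j => (q j : ℂ)) *ᵥ w =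
      ((∑ j, q j * Complex.normSq (w j) : ℝ) : ℂ) := by
  simp only [dotProduct, mulVec_diagonal, Pi.star_apply, RCLike.star_def]
  push_cast
  refine Finset.sum_congr rfl fun j _ => ?_
  rw [← Complex.mul_conj]
  ring

lemma star_dotProduct_mul_diagonal_mul_conjTranspose_mulVec (M : Matrix n J ℂ) (q : J → ℝ)
    (v : n → ℂ) :
    star v ⬝ᵥ (M * diagonal (fun j => (q j : ℂ)) * Mᴴ) *ᵥ v =
      ((∑ j, q j * Complex.normSq ((Mᴴ *ᵥ v) j) : ℝ) : ℂ) := by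
  rw [← star_dotProduct_diagonal_mulVec, ← mulVec_mulVec, ← mulVec_mulVec, dotProduct_mulVec,
    star_mulVec, conjTranspose_conjTranspose]

lemma mul_diagonal_mul_conjTranspose_apply_self [DecidableEq n] (M : Matrix n J ℂ) (q : J → ℝ)
    (k : n) :
    (M * diagonal (fun j => (q j : ℂ)) * Mᴴ) k k =
      ((∑ j, q j * Complex.normSq (M k j) : ℝ) : ℂ) := by
  simpa [mulVec_single_one, Pi.single_apply] using
    star_dotProduct_mul_diagonal_mul_conjTranspose_mulVec M q (Pi.single k 1)

end QuadraticForm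

section Unitary

variable {n J : Type*} [Fintype n]

lemma sum_normSq_apply_eq_conjTranspose_mul_self_apply (M : Matrix n J ℂ) (j : J) :
    ∑ k, Complex.normSq (M k j) = (Mᴴ * M) j j := by
  simp [mul_apply, Complex.ofReal_sum, ← Complex.mul_conj, mul_comm]

variable [DecidableEq n] {U : Matrix n n ℂ}

lemma sum_normSq_col_eq_one_of_mem_unitaryGroup (hU : U ∈ unitaryGroup n ℂ) (j : n) :
    ∑ k, Complex.normSq (U k j) = 1 := by
  have := sum_normSq_apply_eq_conjTranspose_mul_self_apply U j
  rwa [← star_eq_conjTranspose, mem_unitaryGroup_iff'.mp hU, one_apply_eq,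
    Complex.ofReal_eq_one] at this

lemma sum_normSq_row_eq_one_of_mem_unitaryGroup (hU : U ∈ unitaryGroup n ℂ) (k : n) :
    ∑ j, Complex.normSq (U k j) = 1 := by
  simpa [Complex.normSq_conj] using
    sum_normSq_col_eq_one_of_mem_unitaryGroup (Unitary.star_mem hU) k

end Unitary

lemma sum_smul_mul_diagonal_mul_conjTranspose {n ι K : Type*} [Fintype ι] [DecidableEq ι]
    [Fintype K] [DecidableEq K] (p : ι → ℝ) (V : ι → Matrix n K ℂ) (μ : ι → K → ℝ) :
    ∑ i, p i • (V i * diagonal (fun l => (μ i l : ℂ)) * (V i)ᴴ) =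
      (Matrix.of fun a (il : ι × K) => V il.1 a il.2 : Matrix n (ι × K) ℂ) *
        diagonal (fun il : ι × K => ((p il.1 * μ il.1 il.2 : ℝ) : ℂ)) *
        (Matrix.of fun a (il : ι × K) => V il.1 a il.2 : Matrix n (ι × K) ℂ)ᴴ := by
  ext a b
  simp only [Matrix.sum_apply, Matrix.smul_apply, mul_apply, conjTranspose_apply, of_apply,
    diagonal_apply, mul_ite, mul_zero, Finset.sum_ite_eq', Finset.mem_univ, if_true,
    Fintype.sum_prod_type, Finset.smul_sum, Complex.real_smul]
  push_cast
  refine Finset.sum_congr rfl fun i _ => Finset.sum_congr rfl fun l _ => ?_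
  ring

section MixtureOfPureStates

variable {n J : Type*} [Fintype n] [DecidableEq n] [Fintype J] [DecidableEq J]
  {M : Matrix n J ℂ} {q : J → ℝ} {e : n → ℝ}

lemma mul_sum_normSq_div_le_one_of_mul_diagonal_mul_conjTranspose_eq_diagonal
    (hq : ∀ j, 0 ≤ q j) (he : ∀ k, 0 ≤ e k)
    (h : M * diagonal (fun j => (q j : ℂ)) * Mᴴ = diagonal (fun k => (e k : ℂ))) (j : J) :
    q j * ∑ k, Complex.normSq (M k j) / e k ≤ 1 := by
  set s := ∑ k, Complex.normSq (M k j) / e k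
  -- evaluate the quadratic form at `v = A⁺ (M ⬝ j)`, with `A⁺` the pseudo-inverse of
  -- `A = diagonal e` (`x / 0 = 0` supplies the zero entries of `A⁺`)
  set v : n → ℂ := fun k => M k j / (e k : ℂ)
  have hv : (Mᴴ *ᵥ v) j = s := by
    simp only [mulVec, dotProduct, conjTranspose_apply, v, s, Complex.ofReal_sum,
      Complex.ofReal_div]
    refine Finset.sum_congr rfl fun k _ => ?_
    rw [← Complex.mul_conj, RCLike.star_def]
    ring
  have hform : s = ∑ j', q j' * Complex.normSq ((Mᴴ *ᵥ v) j') := by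
    have := star_dotProduct_mul_diagonal_mul_conjTranspose_mulVec M q v
    rw [h, star_dotProduct_diagonal_mulVec] at this
    refine (Finset.sum_congr rfl fun k _ => ?_).trans (Complex.ofReal_injective this)
    rcases eq_or_ne (e k) 0 with hk | hk
    · simp [v, hk]
    · simp only [v, Complex.normSq_div, Complex.normSq_ofReal]
      field_simp
  have hs : 0 ≤ s := Finset.sum_nonneg fun k _ => div_nonneg (Complex.normSq_nonneg _) (he k)
  have hqs : q j * s ^ 2 ≤ s :=
    calc q j * s ^ 2 = q j * Complex.normSq ((Mᴴ *ᵥ v) j) := by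
          rw [hv, Complex.normSq_ofReal, sq]
      _ ≤ s := hform ▸ Finset.single_le_sum
          (fun j' _ => mul_nonneg (hq j') (Complex.normSq_nonneg _)) (Finset.mem_univ j)
  rcases hs.eq_or_lt with hs0 | hs0
  · simp [← hs0]
  · nlinarith

lemma sum_negMulLog_le_of_mul_diagonal_mul_conjTranspose_eq_diagonal (hq : ∀ j, 0 ≤ q j)
    (hM : ∀ j, ∑ k, Complex.normSq (M k j) = 1)
    (h : M * diagonal (fun j => (q j : ℂ)) * Mᴴ = diagonal (fun k => (e k : ℂ))) :
    ∑ k, negMulLog (e k) ≤ ∑ j, negMulLog (q j) := by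
  have he_eq : ∀ k, e k = ∑ j, q j * Complex.normSq (M k j) := fun k =>
    Complex.ofReal_injective <| by
      simpa [h] using mul_diagonal_mul_conjTranspose_apply_self M q k
  have hterm : ∀ j k, 0 ≤ q j * Complex.normSq (M k j) :=
    fun j k => mul_nonneg (hq j) (Complex.normSq_nonneg _)
  have hterm_le : ∀ j k, q j * Complex.normSq (M k j) ≤ e k := fun j k =>
    he_eq k ▸ Finset.single_le_sum (fun j _ => hterm j k) (Finset.mem_univ j)
  have he : ∀ k, 0 ≤ e k := fun k => he_eq k ▸ Finset.sum_nonneg fun j _ => hterm j k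
  -- `B j k` is the share of the eigenvalue `e k` carried by the pure state `M ⬝ j`
  -- (it is `0` when `e k = 0`, since `x / 0 = 0`)
  set B : J → n → ℝ := fun j k => q j * Complex.normSq (M k j) / e k
  have hB0 : ∀ j k, 0 ≤ B j k := fun j k => div_nonneg (hterm j k) (he k)
  have hB1 : ∀ j, ∑ k, B j k ≤ 1 := fun j => by
    simpa only [B, mul_div_assoc, ← Finset.mul_sum] using
      mul_sum_normSq_div_le_one_of_mul_diagonal_mul_conjTranspose_eq_diagonal hq he h j
  have hcol : ∀ k, (∑ j, B j k) * negMulLog (e k) = negMulLog (e k) := fun k => by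
    rcases eq_or_ne (e k) 0 with hk | hk
    · simp [hk]
    · rw [← Finset.sum_div, ← he_eq, div_self hk, one_mul]
  have hrow : ∀ j, ∑ k, B j k * e k = q j := fun j => by
    have hBe : ∀ k, B j k * e k = q j * Complex.normSq (M k j) := fun k => by
      rcases eq_or_ne (e k) 0 with hk | hk
      · simp only [B, hk, div_zero, zero_mul]
        exact (le_antisymm (hk ▸ hterm_le j k) (hterm j k)).symm
      · exact div_mul_cancel₀ _ hk
    rw [Finset.sum_congr rfl fun k _ => hBe k, ← Finset.mul_sum, hM, mul_one]
  calc ∑ k, negMulLog (e k) = ∑ k, (∑ j, B j k) * negMulLog (e k) :=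
        Finset.sum_congr rfl fun k _ => (hcol k).symm
    _ ≤ ∑ j, negMulLog (∑ k, B j k * e k) :=
        sum_sum_mul_negMulLog_le_sum_negMulLog hB0 hB1 he
    _ = ∑ j, negMulLog (q j) := by simp only [hrow]

end MixtureOfPureStates

section Entropy

variable {n : Type*} [Fintype n] [DecidableEq n]

lemma vnEntropy_eq_sum_negMulLog_eigenvalues {A : Matrix n n ℂ} (hA : A.IsHermitian) :
    vnEntropy A = ∑ i, negMulLog (hA.eigenvalues i) :=
  dif_pos hA

lemma Matrix.IsHermitian.eq_eigenvectorUnitary_mul_diagonal_mul_conjTranspose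
    {A : Matrix n n ℂ} (hA : A.IsHermitian) :
    A = (hA.eigenvectorUnitary : Matrix n n ℂ) * diagonal (fun i => (hA.eigenvalues i : ℂ)) *
      (hA.eigenvectorUnitary : Matrix n n ℂ)ᴴ :=
  hA.spectral_theorem

lemma Matrix.IsHermitian.star_eigenvectorUnitary_mul_mul_eigenvectorUnitary
    {A : Matrix n n ℂ} (hA : A.IsHermitian) :
    star (hA.eigenvectorUnitary : Matrix n n ℂ) * A * hA.eigenvectorUnitary =
      diagonal (fun i => (hA.eigenvalues i : ℂ)) := by
  simpa [Function.comp_def] using hA.conjStarAlgAut_star_eigenvectorUnitary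

lemma vnEntropy_le_sum_negMulLog_of_eq_mul_diagonal_mul_conjTranspose {J : Type*} [Fintype J]
    [DecidableEq J] {A : Matrix n n ℂ} (hA : A.IsHermitian) {M : Matrix n J ℂ} {q : J → ℝ}
    (hq : ∀ j, 0 ≤ q j) (hM : ∀ j, ∑ k, Complex.normSq (M k j) = 1)
    (h : A = M * diagonal (fun j => (q j : ℂ)) * Mᴴ) :
    vnEntropy A ≤ ∑ j, negMulLog (q j) := by
  have hUAU := hA.star_eigenvectorUnitary_mul_mul_eigenvectorUnitary
  have hUU := mem_unitaryGroup_iff.mp hA.eigenvectorUnitary.2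
  set U : Matrix n n ℂ := ↑hA.eigenvectorUnitary
  have hW : (star U * M) * diagonal (fun j => (q j : ℂ)) * (star U * M)ᴴ =
      diagonal (fun i => (hA.eigenvalues i : ℂ)) := by
    rw [← hUAU, h]
    simp only [conjTranspose_mul, star_eq_conjTranspose, conjTranspose_conjTranspose,
      Matrix.mul_assoc]
  have hWM : ∀ j, ∑ k, Complex.normSq ((star U * M) k j) = 1 := fun j => by
    have := sum_normSq_apply_eq_conjTranspose_mul_self_apply (star U * M) j
    rw [conjTranspose_mul, ← star_eq_conjTranspose, star_star, Matrix.mul_assoc,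
      ← Matrix.mul_assoc U, hUU, Matrix.one_mul,
      ← sum_normSq_apply_eq_conjTranspose_mul_self_apply, hM] at this
    exact_mod_cast this
  rw [vnEntropy_eq_sum_negMulLog_eigenvalues hA]
  exact sum_negMulLog_le_of_mul_diagonal_mul_conjTranspose_eq_diagonal hq hWM hW

lemma vnEntropy_le_sum_negMulLog_re_diag {A : Matrix n n ℂ} (hA : A.PosSemidef)
    {U : Matrix n n ℂ} (hU : U ∈ unitaryGroup n ℂ) :
    vnEntropy A ≤ ∑ k, negMulLog ((star U * A * U) k k).re := by
  have hAV := hA.1.eq_eigenvectorUnitary_mul_diagonal_mul_conjTranspose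
  set V : Matrix n n ℂ := ↑hA.1.eigenvectorUnitary
  set μ := hA.1.eigenvalues
  have hW : star U * V ∈ unitaryGroup n ℂ :=
    mul_mem (Unitary.star_mem hU) hA.1.eigenvectorUnitary.2
  have hUAU : star U * A * U = (star U * V) * diagonal (fun l => (μ l : ℂ)) * (star U * V)ᴴ := by
    conv_lhs => rw [hAV]
    simp only [conjTranspose_mul, star_eq_conjTranspose, conjTranspose_conjTranspose,
      Matrix.mul_assoc]
  have hdiag : ∀ k, ((star U * A * U) k k).re = ∑ l, Complex.normSq ((star U * V) k l) * μ l :=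
    fun k => by
      rw [hUAU, mul_diagonal_mul_conjTranspose_apply_self, Complex.ofReal_re]
      simp only [mul_comm]
  calc vnEntropy A = ∑ l, (∑ k, Complex.normSq ((star U * V) k l)) * negMulLog (μ l) := by
        simp only [vnEntropy_eq_sum_negMulLog_eigenvalues hA.1,
          sum_normSq_col_eq_one_of_mem_unitaryGroup hW, one_mul, μ]
    _ ≤ ∑ k, negMulLog (∑ l, Complex.normSq ((star U * V) k l) * μ l) :=
        sum_sum_mul_negMulLog_le_sum_negMulLog (fun _ _ => Complex.normSq_nonneg _)
          (fun k => (sum_normSq_row_eq_one_of_mem_unitaryGroup hW k).le) hA.eigenvalues_nonneg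
    _ = ∑ k, negMulLog ((star U * A * U) k k).re := by simp only [hdiag]

end Entropy

section Mixture

variable {n ι : Type*} [Fintype n] [DecidableEq n] [Fintype ι] {p : ι → ℝ}
  {ρ : ι → Matrix n n ℂ}

lemma sum_mul_vnEntropy_le_vnEntropy_sum_smul (hp0 : ∀ i, 0 ≤ p i) (hp1 : ∑ i, p i ≤ 1)
    (hρ : ∀ i, (ρ i).PosSemidef) :
    ∑ i, p i * vnEntropy (ρ i) ≤ vnEntropy (∑ i, p i • ρ i) := by
  have hσ : (∑ i, p i • ρ i).PosSemidef := posSemidef_sum _ fun i _ => (hρ i).smul (hp0 i)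
  have hUσU := hσ.1.star_eigenvectorUnitary_mul_mul_eigenvectorUnitary
  have hU := hσ.1.eigenvectorUnitary.2
  set U : Matrix n n ℂ := ↑hσ.1.eigenvectorUnitary
  set x : ι → n → ℝ := fun i k => ((star U * ρ i * U) k k).re
  have hx0 : ∀ i k, 0 ≤ x i k := fun i k => by
    have := ((hρ i).conjTranspose_mul_mul_same U).diag_nonneg (i := k)
    exact (Complex.nonneg_iff.mp (star_eq_conjTranspose U ▸ this)).1
  have heig : ∀ k, hσ.1.eigenvalues k = ∑ i, p i * x i k := fun k => by
    have := congrFun₂ hUσU k k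
    simp only [Finset.mul_sum, Finset.sum_mul, mul_smul_comm, smul_mul_assoc, Matrix.sum_apply,
      Matrix.smul_apply, diagonal_apply_eq] at this
    simpa [x] using (congrArg Complex.re this).symm
  calc ∑ i, p i * vnEntropy (ρ i) ≤ ∑ i, p i * ∑ k, negMulLog (x i k) :=
        Finset.sum_le_sum fun i _ => mul_le_mul_of_nonneg_left
          (vnEntropy_le_sum_negMulLog_re_diag (hρ i) hU) (hp0 i)
    _ = ∑ k, ∑ i, p i * negMulLog (x i k) := by
        simp_rw [Finset.mul_sum]; exact Finset.sum_comm
    _ ≤ ∑ k, negMulLog (∑ i, p i * x i k) := Finset.sum_le_sum fun k _ =>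
        sum_mul_negMulLog_le_negMulLog_sum hp0 hp1 fun i => hx0 i k
    _ = vnEntropy (∑ i, p i • ρ i) := by
        simp only [vnEntropy_eq_sum_negMulLog_eigenvalues hσ.1, heig]

lemma IsDensity.sum_eigenvalues_eq_one {A : Matrix n n ℂ} (hA : IsDensity A) :
    ∑ i, hA.1.1.eigenvalues i = 1 := by
  have := hA.2.symm.trans hA.1.1.trace_eq_sum_eigenvalues
  apply Complex.ofReal_injective
  simpa using this.symm

lemma vnEntropy_sum_smul_le [DecidableEq ι] (hp0 : ∀ i, 0 ≤ p i) (hρ : ∀ i, IsDensity (ρ i)) :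
    vnEntropy (∑ i, p i • ρ i) ≤ ∑ i, p i * vnEntropy (ρ i) + ∑ i, negMulLog (p i) := by
  have hσ : (∑ i, p i • ρ i).PosSemidef := posSemidef_sum _ fun i _ => (hρ i).1.smul (hp0 i)
  have hσ_eq : ∑ i, p i • ρ i = ∑ i, p i • ((hρ i).1.1.eigenvectorUnitary.1 *
      diagonal (fun l => ((hρ i).1.1.eigenvalues l : ℂ)) * ((hρ i).1.1.eigenvectorUnitary.1)ᴴ) :=
    Finset.sum_congr rfl fun i _ => by
      rw [← (hρ i).1.1.eq_eigenvectorUnitary_mul_diagonal_mul_conjTranspose]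
  have hdecomp := hσ_eq.trans (sum_smul_mul_diagonal_mul_conjTranspose p
    (fun i => (hρ i).1.1.eigenvectorUnitary.1) (fun i => (hρ i).1.1.eigenvalues))
  have hM : ∀ il : ι × n,
      ∑ k, Complex.normSq ((hρ il.1).1.1.eigenvectorUnitary.1 k il.2) = 1 :=
    fun il => sum_normSq_col_eq_one_of_mem_unitaryGroup (hρ il.1).1.1.eigenvectorUnitary.2 il.2
  have hq : ∀ il : ι × n, 0 ≤ p il.1 * (hρ il.1).1.1.eigenvalues il.2 :=
    fun il => mul_nonneg (hp0 il.1) ((hρ il.1).1.eigenvalues_nonneg il.2)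
  refine (vnEntropy_le_sum_negMulLog_of_eq_mul_diagonal_mul_conjTranspose hσ.1 hq hM
    hdecomp).trans_eq ?_
  simp only [Fintype.sum_prod_type,
    sum_negMulLog_mul_of_sum_eq_one _ (hρ _).sum_eigenvalues_eq_one, Finset.sum_add_distrib,
    vnEntropy_eq_sum_negMulLog_eigenvalues (hρ _).1.1]

end Mixture

theorem stmt_4 {m d : ℕ} (p : Fin m → ℝ) (hp : IsProb p)
    (ρ : Fin m → Matrix (Fin d) (Fin d) ℂ) (hρ : ∀ i, IsDensity (ρ i)) :
    ∑ i, p i * vnEntropy (ρ i) ≤ vnEntropy (∑ i, p i • ρ i) ∧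
    vnEntropy (∑ i, p i • ρ i) ≤ ∑ i, p i * vnEntropy (ρ i) + shannonEntropy p :=
  ⟨sum_mul_vnEntropy_le_vnEntropy_sum_smul hp.1 hp.2.le fun i => (hρ i).1,
    vnEntropy_sum_smul_le hp.1 hρ⟩
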